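/- arXiv:2012.08069 — 2 statements merged into one kernel-verified Lean document; each statement's English description precedes it below -/
import Mathlib

section
/- Let h ∈ ℂ with Im h > 0, μ ∈ ℝ with μ ≠ Re h, and ξ = (μ·Re h - |h|²)/(μ - Re h). For m ∈ ℂ, define V_μ(m) = ((m + μ)·Im h)/((μ - Re h)·m + μ·Re h - |h|²) and similarly V_ξ(m) = ((m + ξ)·Im h)/((ξ - Re h)·m + ξ·Re h - |h|²). Then whenever all denominators are nonzero, V_μ(m) = -1/V_ξ(m). -/
/-!
With `a = μ - Re h`, the identity `|h|² = (Re h)² + (Im h)²` gives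
`ξ - Re h = -(Im h)² / a` and `ξ Re h - |h|² = -μ (Im h)² / a`. Hence the numerator `m + ξ` of
`V_ξ` is the denominator of `V_μ` divided by `a`, while the denominator of `V_ξ` is
`-(Im h)² (m + μ) / a`, so `V_μ V_ξ = -1`.
-/

open Complex

namespace SchrodingerImpedance

noncomputable def denom (h : ℂ) (μ : ℝ) (m : ℂ) : ℂ :=
  ((μ : ℂ) - (h.re : ℂ)) * m + (μ : ℂ) * (h.re : ℂ) - (‖h‖ ^ 2 : ℝ)

noncomputable def impedance (h : ℂ) (μ : ℝ) (m : ℂ) : ℂ :=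
  ((m + (μ : ℂ)) * (h.im : ℂ)) / denom h μ m

noncomputable def dualParam (h : ℂ) (μ : ℝ) : ℝ :=
  (μ * h.re - ‖h‖ ^ 2) / (μ - h.re)

variable {h : ℂ} {μ : ℝ}

theorem dualParam_sub_re (hμ : μ ≠ h.re) :
    dualParam h μ - h.re = -h.im ^ 2 / (μ - h.re) := by
  have ha : μ - h.re ≠ 0 := sub_ne_zero.mpr hμ
  rw [dualParam, eq_div_iff ha, sub_mul, div_mul_cancel₀ _ ha, ← sq_norm_sub_sq_re]
  ring

theorem dualParam_mul_re_sub_sq_norm (hμ : μ ≠ h.re) :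
    dualParam h μ * h.re - ‖h‖ ^ 2 = -μ * h.im ^ 2 / (μ - h.re) := by
  have ha : μ - h.re ≠ 0 := sub_ne_zero.mpr hμ
  rw [dualParam, eq_div_iff ha, sub_mul, mul_right_comm, div_mul_cancel₀ _ ha,
    ← sq_norm_sub_sq_re]
  ring

theorem add_dualParam (hμ : μ ≠ h.re) (m : ℂ) :
    m + (dualParam h μ : ℂ) = denom h μ m / ((μ : ℂ) - h.re) := by
  have ha : (μ : ℂ) - h.re ≠ 0 := by exact_mod_cast sub_ne_zero.mpr hμ
  rw [eq_div_iff ha, dualParam, denom]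
  push_cast
  field_simp
  ring

theorem denom_dualParam (hμ : μ ≠ h.re) (m : ℂ) :
    denom h (dualParam h μ) m = -(h.im : ℂ) ^ 2 * (m + μ) / ((μ : ℂ) - h.re) := by
  have hsub := congrArg ((↑) : ℝ → ℂ) (dualParam_sub_re hμ)
  have hmul := congrArg ((↑) : ℝ → ℂ) (dualParam_mul_re_sub_sq_norm hμ)
  push_cast at hsub hmul
  rw [denom]
  push_cast
  linear_combination m * hsub + hmul

theorem impedance_mul_impedance_dualParam (hμ : μ ≠ h.re) {m : ℂ} (hD : denom h μ m ≠ 0)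
    (hD' : denom h (dualParam h μ) m ≠ 0) :
    impedance h μ m * impedance h (dualParam h μ) m = -1 := by
  have ha : (μ : ℂ) - h.re ≠ 0 := by exact_mod_cast sub_ne_zero.mpr hμ
  rw [denom_dualParam hμ] at hD'
  have him : (h.im : ℂ) ≠ 0 := by rintro hi; simp [hi] at hD'
  have hmμ : m + (μ : ℂ) ≠ 0 := by rintro hm; simp [hm] at hD'
  rw [impedance, impedance, add_dualParam hμ, denom_dualParam hμ]
  field_simp

end SchrodingerImpedance

open SchrodingerImpedance in
theorem stmt6_general (h : ℂ) (μ : ℝ) (hμ : μ ≠ h.re)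
    (m : ℂ) :
    let ξ : ℝ := (μ * h.re - ‖h‖ ^ 2) / (μ - h.re)
    let Vμ : ℂ := ((m + (μ : ℂ)) * (h.im : ℂ)) /
      (((μ : ℂ) - (h.re : ℂ)) * m + (μ : ℂ) * (h.re : ℂ) - (‖h‖ ^ 2 : ℝ))
    let Vξ : ℂ := ((m + (ξ : ℂ)) * (h.im : ℂ)) /
      (((ξ : ℂ) - (h.re : ℂ)) * m + (ξ : ℂ) * (h.re : ℂ) - (‖h‖ ^ 2 : ℝ))
    (((μ : ℂ) - (h.re : ℂ)) * m + (μ : ℂ) * (h.re : ℂ) - (‖h‖ ^ 2 : ℝ)) ≠ 0 →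
    (((ξ : ℂ) - (h.re : ℂ)) * m + (ξ : ℂ) * (h.re : ℂ) - (‖h‖ ^ 2 : ℝ)) ≠ 0 →
    Vξ ≠ 0 →
    Vμ = -1 / Vξ := by
  intro ξ Vμ Vξ hDμ hDξ hVξ
  exact eq_div_of_mul_eq hVξ (impedance_mul_impedance_dualParam hμ hDμ hDξ)

theorem stmt6 (h : ℂ) (him : 0 < h.im) (μ : ℝ) (hμ : μ ≠ h.re)
    (m : ℂ) :
    let ξ : ℝ := (μ * h.re - ‖h‖ ^ 2) / (μ - h.re)
    let Vμ : ℂ := ((m + (μ : ℂ)) * (h.im : ℂ)) /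
      (((μ : ℂ) - (h.re : ℂ)) * m + (μ : ℂ) * (h.re : ℂ) - (‖h‖ ^ 2 : ℝ))
    let Vξ : ℂ := ((m + (ξ : ℂ)) * (h.im : ℂ)) /
      (((ξ : ℂ) - (h.re : ℂ)) * m + (ξ : ℂ) * (h.re : ℂ) - (‖h‖ ^ 2 : ℝ))
    (((μ : ℂ) - (h.re : ℂ)) * m + (μ : ℂ) * (h.re : ℂ) - (‖h‖ ^ 2 : ℝ)) ≠ 0 →
    (((ξ : ℂ) - (h.re : ℂ)) * m + (ξ : ℂ) * (h.re : ℂ) - (‖h‖ ^ 2 : ℝ)) ≠ 0 →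
    Vξ ≠ 0 →
    Vμ = -1 / Vξ :=
  stmt6_general h μ hμ m
end

section
/- Let y : [1, ∞) → ℂ be continuously differentiable with y' ∈ L²[1,∞), y/x ∈ L²[1,∞), and y(x) → 0 as x → ∞. Then |y(1)|² ≤ ‖y'‖²_{L²[1,∞)} + 2‖y(x)/x‖²_{L²[1,∞)}. -/
/-! Put `g(x) = ‖y(x)‖² / x`. Then `g(1) = ‖y(1)‖²` and `g → 0` at infinity, so `‖y(1)‖² = -∫₁^∞ g'`.
Since `g' = 2⟪y, y'⟫ / x - ‖y‖² / x²`, Cauchy–Schwarz and `2ab ≤ a² + b²` give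
`|g'| ≤ ‖y'‖² + 2 ‖y / x‖²` pointwise, and integrating this bound yields the inequality. -/

open MeasureTheory Set Filter Topology

open scoped RealInnerProductSpace

section

variable {E : Type*} [NormedAddCommGroup E] [InnerProductSpace ℝ E]

theorem HasDerivAt.norm_sq_div_self {y : ℝ → E} {y' : E} {x : ℝ} (hy : HasDerivAt y y' x)
    (hx : x ≠ 0) :
    HasDerivAt (fun t => ‖y t‖ ^ 2 / t) (2 * ⟪y x, y'⟫ / x - ‖y x‖ ^ 2 / x ^ 2) x := by
  refine (hy.norm_sq.div (hasDerivAt_id' x) hx).congr_deriv ?_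
  field_simp

theorem abs_two_inner_div_sub_norm_sq_div_sq_le (u v : E) {x : ℝ} (hx : 0 < x) :
    |2 * ⟪u, v⟫ / x - ‖u‖ ^ 2 / x ^ 2| ≤ ‖v‖ ^ 2 + 2 * (‖u‖ / x) ^ 2 := by
  have hinner : |⟪u, v⟫ / x| ≤ ‖u‖ / x * ‖v‖ := by
    rw [abs_div, abs_of_pos hx, div_mul_eq_mul_div]
    exact div_le_div_of_nonneg_right (abs_real_inner_le_norm u v) hx.le
  calc |2 * ⟪u, v⟫ / x - ‖u‖ ^ 2 / x ^ 2|
      = |2 * (⟪u, v⟫ / x) - (‖u‖ / x) ^ 2| := by rw [div_pow, mul_div_assoc]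
    _ ≤ 2 * (‖u‖ / x * ‖v‖) + (‖u‖ / x) ^ 2 := by
      refine (abs_sub _ _).trans (add_le_add ?_ (abs_sq _).le)
      rw [abs_mul, abs_two]
      gcongr
    _ ≤ ‖v‖ ^ 2 + 2 * (‖u‖ / x) ^ 2 := by nlinarith [sq_nonneg (‖u‖ / x - ‖v‖)]

end

theorem abs_le_integral_of_hasDerivAt_of_tendsto_zero {g g' F : ℝ → ℝ} {a : ℝ}
    (hcont : ContinuousWithinAt g (Ici a) a) (hderiv : ∀ x ∈ Ioi a, HasDerivAt g (g' x) x)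
    (hbound : ∀ x ∈ Ioi a, |g' x| ≤ F x) (hF : IntegrableOn F (Ioi a))
    (hlim : Tendsto g atTop (𝓝 0)) :
    |g a| ≤ ∫ x in Ioi a, F x := by
  have hmeas : AEStronglyMeasurable g' (volume.restrict (Ioi a)) :=
    (measurable_deriv g).aestronglyMeasurable.congr <|
      (ae_restrict_mem measurableSet_Ioi).mono fun x hx => (hderiv x hx).deriv
  have hbound_ae : ∀ᵐ x ∂volume.restrict (Ioi a), ‖g' x‖ ≤ F x :=
    (ae_restrict_mem measurableSet_Ioi).mono hbound
  have hftc := integral_Ioi_of_hasDerivAt_of_tendsto hcont hderiv (hF.mono' hmeas hbound_ae) hlim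
  rw [zero_sub] at hftc
  calc |g a| = ‖∫ x in Ioi a, g' x‖ := by rw [hftc, norm_neg, Real.norm_eq_abs]
    _ ≤ ∫ x in Ioi a, F x := norm_integral_le_of_norm_le hF hbound_ae

theorem stmt14 (y : ℝ → ℂ)
    (hy : ContDiffOn ℝ 1 y (Set.Ici 1))
    (hy' : IntegrableOn (fun x => ‖deriv y x‖ ^ 2) (Set.Ioi 1))
    (hyx : IntegrableOn (fun x => ‖y x / (x : ℂ)‖ ^ 2) (Set.Ioi 1))
    (hlim : Filter.Tendsto y Filter.atTop (nhds 0)) :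
    ‖y 1‖ ^ 2 ≤ (∫ x in Set.Ioi (1 : ℝ), ‖deriv y x‖ ^ 2) +
      2 * ∫ x in Set.Ioi (1 : ℝ), ‖y x / (x : ℂ)‖ ^ 2 := by
  have hderiv : ∀ x ∈ Ioi (1 : ℝ), HasDerivAt y (deriv y x) x := fun x hx =>
    ((hy.differentiableOn one_ne_zero x (mem_Ici.2 hx.out.le)).differentiableAt
      (Ici_mem_nhds hx)).hasDerivAt
  have hnorm_div : ∀ x ∈ Ioi (1 : ℝ), ‖y x / (x : ℂ)‖ = ‖y x‖ / x := fun x hx => by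
    rw [norm_div, Complex.norm_real, Real.norm_of_nonneg (zero_le_one.trans hx.out.le)]
  have hcont : ContinuousWithinAt (fun t => ‖y t‖ ^ 2 / t) (Ici 1) 1 :=
    ((hy.continuousOn 1 self_mem_Ici).norm.pow 2).div continuousWithinAt_id one_ne_zero
  have hdecay : Tendsto (fun t => ‖y t‖ ^ 2 / t) atTop (𝓝 0) := by
    simpa using (hlim.norm.pow 2).div_atTop tendsto_id
  have hF : IntegrableOn (fun x => ‖deriv y x‖ ^ 2 + 2 * ‖y x / (x : ℂ)‖ ^ 2) (Ioi 1) :=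
    hy'.add (hyx.const_mul 2)
  have key := abs_le_integral_of_hasDerivAt_of_tendsto_zero hcont
    (fun x hx => (hderiv x hx).norm_sq_div_self (zero_lt_one.trans hx.out).ne')
    (fun x hx => by
      rw [hnorm_div x hx]
      exact abs_two_inner_div_sub_norm_sq_div_sq_le _ _ (zero_lt_one.trans hx.out))
    hF hdecay
  rwa [div_one, abs_of_nonneg (by positivity), integral_add hy' (hyx.const_mul 2),
    integral_const_mul] at key
end
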